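/- The cubical nerve of a small category C, defined by (NC)_n = Cat([1]^n, C) (functors from the poset [1]^n to C), is a functor N : Cat → cSet that is full and faithful. -/

import Mathlib

/-! ## Combinatorics of the cube category: faces, degeneracies, connections.
We model the poset `[1]^n` as `Fin n → Bool` with the pointwise order
(`false = 0`, `true = 1`).  Indices are 0-based: the map `cubeFace i ε`
inserts `ε` in the `i`-th coordinate (so it corresponds to `∂_{i+1,ε}` in
1-based notation), `cubeDeg i` deletes the `i`-th coordinate, and
`cubeConn i ε` merges coordinates `i` and `i+1` using `max` (for `ε = false`,
i.e. the negative connection `γ_{i+1,0}`) or `min` (for `ε = true`, i.e. the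
positive connection `γ_{i+1,1}`). -/

/-- The face map `∂_{i,ε} : [1]^n → [1]^{n+1}` (0-based index `i`),
inserting `ε` in the `i`-th coordinate. -/
def cubeFace {n : ℕ} (i : Fin (n + 1)) (ε : Bool) :
    (Fin n → Bool) → (Fin (n + 1) → Bool) :=
  fun x => Fin.insertNth i ε x

/-- The degeneracy `σ_i : [1]^{n+1} → [1]^n` (0-based index `i`),
deleting the `i`-th coordinate. -/
def cubeDeg {n : ℕ} (i : Fin (n + 1)) :
    (Fin (n + 1) → Bool) → (Fin n → Bool) :=
  fun x j => x (i.succAbove j)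

/-- The connection `γ_{i,ε} : [1]^{n+1} → [1]^n` (0-based index `i`),
taking the `max` (if `ε = false`, the negative connection) or the `min`
(if `ε = true`, the positive connection) of the coordinates `i` and `i+1`. -/
def cubeConn {n : ℕ} (i : Fin n) (ε : Bool) :
    (Fin (n + 1) → Bool) → (Fin n → Bool) :=
  fun x j =>
    if j = i then (if ε then min (x i.castSucc) (x i.succ)
                   else max (x i.castSucc) (x i.succ))
    else if (j : ℕ) < (i : ℕ) then x j.castSucc else x j.succ

open CategoryTheory

/-! ## The cube category `□` (with connections) and cubical sets. -/

/-- Juxtaposition of maps between Boolean cubes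
(`(f ⊗ g)(x, y) = (f x, g y)`). -/
def cubeJuxt {a b c d : ℕ} (f : (Fin a → Bool) → (Fin b → Bool))
    (g : (Fin c → Bool) → (Fin d → Bool)) :
    (Fin (a + c) → Bool) → (Fin (b + d) → Bool) :=
  fun x => Fin.append (f (fun i => x (Fin.castAdd c i)))
    (g (fun j => x (Fin.natAdd a j)))

/-- The maps of the cube category: those maps `[1]^m → [1]^n` generated,
under identities and composition, by the faces, degeneracies and
connections (equivalently, since the cube category is monoidal, also
closed under juxtaposition). -/
inductive IsCubeMap : ∀ {m n : ℕ}, ((Fin m → Bool) → (Fin n → Bool)) → Prop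
  | id (n : ℕ) : IsCubeMap (id : (Fin n → Bool) → (Fin n → Bool))
  | comp {m n k : ℕ} {f : (Fin m → Bool) → (Fin n → Bool)}
      {g : (Fin n → Bool) → (Fin k → Bool)} :
      IsCubeMap f → IsCubeMap g → IsCubeMap (g ∘ f)
  | face {n : ℕ} (i : Fin (n + 1)) (ε : Bool) : IsCubeMap (cubeFace (n := n) i ε)
  | deg {n : ℕ} (i : Fin (n + 1)) : IsCubeMap (cubeDeg (n := n) i)
  | conn {n : ℕ} (i : Fin n) (ε : Bool) : IsCubeMap (cubeConn (n := n) i ε)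
  | tensor {a b c d : ℕ} {f : (Fin a → Bool) → (Fin b → Bool)}
      {g : (Fin c → Bool) → (Fin d → Bool)} :
      IsCubeMap f → IsCubeMap g → IsCubeMap (cubeJuxt f g)

/-- Objects of the cube category `□`: the posets `[1]^n`. -/
structure Box where
  n : ℕ

/-- The object `[1]^n` of the cube category. -/
def bx (n : ℕ) : Box := ⟨n⟩

/-- Morphisms of the cube category. -/
def CubeHom (a b : Box) : Type :=
  { f : (Fin a.n → Bool) → (Fin b.n → Bool) // IsCubeMap f }

instance : Category Box where
  Hom := CubeHom
  id a := ⟨_root_.id, IsCubeMap.id a.n⟩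
  comp f g := ⟨g.1 ∘ f.1, IsCubeMap.comp f.2 g.2⟩
  id_comp := by intros; rfl
  comp_id := by intros; rfl
  assoc := by intros; rfl

/-- The category of cubical sets: presheaves on the cube category. -/
abbrev cSet := Boxᵒᵖ ⥤ Type

/-- The face `∂_{i,ε}` as a morphism of the cube category. -/
def faceHom (n : ℕ) (i : Fin (n + 1)) (ε : Bool) : bx n ⟶ bx (n + 1) :=
  ⟨cubeFace i ε, IsCubeMap.face i ε⟩

/-- The degeneracy `σ_i` as a morphism of the cube category. -/
def degHom (n : ℕ) (i : Fin (n + 1)) : bx (n + 1) ⟶ bx n :=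
  ⟨cubeDeg i, IsCubeMap.deg i⟩

/-- The connection `γ_{i,ε}` as a morphism of the cube category. -/
def connHom (n : ℕ) (i : Fin n) (ε : Bool) : bx (n + 1) ⟶ bx n :=
  ⟨cubeConn i ε, IsCubeMap.conn i ε⟩

/-- Juxtaposition (the monoidal structure of the cube category) on morphisms. -/
def tensorCubeHom {a b c d : ℕ} (f : bx a ⟶ bx b) (g : bx c ⟶ bx d) :
    bx (a + c) ⟶ bx (b + d) :=
  ⟨cubeJuxt f.1 g.1, IsCubeMap.tensor f.2 g.2⟩

/-- Maps of the cube category are monotone. -/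
theorem IsCubeMap.monotone : ∀ {m n : ℕ}
    {f : (Fin m → Bool) → (Fin n → Bool)}, IsCubeMap f → Monotone f := by
  intro m n f h
  induction h with
  | id n => exact monotone_id
  | comp hf hg ihf ihg => exact ihg.comp ihf
  | face i ε =>
    intro a b hab j
    refine Fin.succAboveCases i ?_ ?_ j
    · simp [cubeFace, Fin.insertNth_apply_same]
    · intro j
      simp only [cubeFace, Fin.insertNth_apply_succAbove]
      exact hab j
  | deg i => exact fun a b hab j => hab _
  | conn i ε =>
    intro a b hab j
    simp only [cubeConn]
    split_ifs
    · exact min_le_min (hab _) (hab _)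
    · exact max_le_max (hab _) (hab _)
    · exact hab _
    · exact hab _
  | tensor hf hg ihf ihg =>
    intro a b hab j
    simp only [cubeJuxt]
    refine Fin.addCases ?_ ?_ j
    · intro j
      simp only [Fin.append_left]
      exact ihf (fun i => hab _) j
    · intro j
      simp only [Fin.append_right]
      exact ihg (fun i => hab _) j


/-- The poset `[1]^n`, regarded as a (pre)order category (type synonym to pick
the preorder-category structure rather than the product-category structure). -/
def posetCube (n : ℕ) : Type := Fin n → Bool

noncomputable instance (n : ℕ) : Preorder (posetCube n) := inferInstanceAs (Preorder (Fin n → Bool))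

/-- The functor `[1]^a → [1]^b` of poset categories induced by a morphism of
the cube category. -/
noncomputable def functorOfCubeHom {a b : Box} (f : a ⟶ b) :
    posetCube a.n ⥤ posetCube b.n :=
  Monotone.functor (f := (f.1 : posetCube a.n → posetCube b.n))
    (fun _ _ h => IsCubeMap.monotone f.2 h)

/-! ## The cubical nerve of a category. -/

/-- The cubical nerve of a (small) category: `(N C)_n = Fun([1]^n, C)`,
with cubical structure maps given by precomposition. -/
noncomputable def cubicalNerve (C : Type) [SmallCategory C] : cSet where
  obj b := posetCube b.unop.n ⥤ C
  map g := TypeCat.ofHom (fun F => functorOfCubeHom g.unop ⋙ F)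
  map_id b := by
    ext F : 3
    change functorOfCubeHom (𝟙 b).unop ⋙ F = F
    refine CategoryTheory.Functor.ext (fun x => rfl) (fun x y f => ?_)
    erw [eqToHom_refl, eqToHom_refl, Category.comp_id, Category.id_comp]
    exact congrArg F.map (Subsingleton.elim _ _)
  map_comp f g := by
    ext F : 3
    change functorOfCubeHom (f ≫ g).unop ⋙ F =
      functorOfCubeHom g.unop ⋙ functorOfCubeHom f.unop ⋙ F
    refine CategoryTheory.Functor.ext (fun x => rfl) (fun x y u => ?_)
    erw [eqToHom_refl, eqToHom_refl, Category.comp_id, Category.id_comp]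
    exact congrArg F.map (Subsingleton.elim _ _)

/-- The action of the cubical nerve on functors, by postcomposition. -/
noncomputable def cubicalNerveMap {C D : Type} [SmallCategory C] [SmallCategory D]
    (F : C ⥤ D) : cubicalNerve C ⟶ cubicalNerve D where
  app b := TypeCat.ofHom (fun G => G ⋙ F)
  naturality _ _ _ := rfl

/-! A functor out of the poset `[1]^n` is determined by its values on the vertices and on the
edges `x ⋖ y`, since every relation `x ≤ y` is a chain of such edges. Vertices `[1]^0 → [1]^n`
and edges `[1]^1 → [1]^n` are maps of the cube category (composites of faces), so a map
`α : N C ⟶ N D` is determined by its components in dimensions `0` and `1`, and these define a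
functor `F : C ⥤ D`. It preserves identities because `𝟙 c` is the degenerate `1`-cube on `c`, and
composition because a composable pair `f, g` spans a `2`-cube with edges `f`, `g`, `f ≫ g` and an
identity. By naturality, `N F` and `α` agree on the vertices and edges of every cube, hence
everywhere. -/

open CategoryTheory Opposite Relation

theorem IsCubeMap.const : ∀ {n : ℕ} (x : Fin n → Bool), IsCubeMap fun _ : Fin 0 → Bool => x
  | 0, _ => by convert IsCubeMap.id 0
  | n + 1, x => by
    simpa [Function.comp_def, cubeFace, Fin.insertNth_zero'] using
      (IsCubeMap.const (Fin.tail x)).comp (IsCubeMap.face 0 (x 0))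

theorem IsCubeMap.insertNth : ∀ {n : ℕ} (i : Fin (n + 1)) (w : Fin n → Bool),
    IsCubeMap fun t : Fin 1 → Bool => Fin.insertNth i (t 0) w
  | 0, i, w => by
    convert IsCubeMap.id 1 using 1
    funext t j
    fin_cases i; fin_cases j; rfl
  | n + 1, i, w => by
    obtain ⟨a, w, rfl⟩ : ∃ a w', w = Fin.cons a w' := ⟨_, _, (Fin.cons_self_tail w).symm⟩
    cases i using Fin.cases with
    | zero =>
      convert (IsCubeMap.insertNth 0 w).comp (IsCubeMap.face 1 a) using 2 with t
      simp only [Function.comp_apply, cubeFace, ← Fin.succ_zero_eq_one, Fin.insertNth_succ_cons,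
        Fin.insertNth_zero']
    | succ j =>
      simpa [Function.comp_def, cubeFace, Fin.insertNth_zero'] using
        (IsCubeMap.insertNth j w).comp (IsCubeMap.face 0 a)

theorem IsCubeMap.segment_of_covBy {n : ℕ} {x y : Fin n → Bool} (h : x ⋖ y) :
    IsCubeMap fun t : Fin 1 → Bool => bif t 0 then y else x := by
  obtain ⟨i, hi, hne⟩ := Pi.covBy_iff.1 h
  cases n with
  | zero => exact i.elim0
  | succ n =>
    have hxi : x i = false := by revert hi; cases x i <;> cases y i <;> simp
    have hyi : y i = true := by revert hi; cases x i <;> cases y i <;> simp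
    convert IsCubeMap.insertNth i (i.removeNth x) using 1
    funext t j
    rw [Fin.insertNth_removeNth]
    rcases eq_or_ne j i with rfl | hj
    · cases t 0 <;> simp [hxi, hyi]
    · cases t 0 <;> simp [hj, hne j hj]

theorem CategoryTheory.Functor.hext_of_reflTransGen {P E : Type*} [Preorder P] [Category E]
    {r : P → P → Prop} (hr : ∀ x y, x ≤ y ↔ ReflTransGen r x y) {F G : P ⥤ E}
    (hobj : ∀ x, F.obj x = G.obj x)
    (hmap : ∀ x y, r x y → ∀ h : x ≤ y, F.map (homOfLE h) ≍ G.map (homOfLE h)) :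
    F = G := by
  refine Functor.hext hobj fun x y e => ?_
  have key : ∀ y, ReflTransGen r x y → ∀ h : x ≤ y, F.map (homOfLE h) ≍ G.map (homOfLE h) := by
    intro y hxy
    induction hxy with
    | refl =>
      intro h
      simp only [homOfLE_refl, Functor.map_id]
      rw [hobj x]
    | @tail z y hxz hzy ih =>
      intro h
      have hxz' := (hr x z).2 hxz
      have hzy' := (hr z y).2 (.single hzy)
      rw [show homOfLE h = homOfLE hxz' ≫ homOfLE hzy' from rfl, F.map_comp, G.map_comp]
      exact heq_comp (hobj x) (hobj z) (hobj y) (ih hxz') (hmap z y hzy hzy')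
  exact key y ((hr x y).1 (leOfHom e)) (leOfHom e)

namespace posetCube

instance : Unique (posetCube 0) := inferInstanceAs (Unique (Fin 0 → Bool))

def ofBool (b : Bool) : posetCube 1 := fun _ => b

lemma eq_ofBool (x : posetCube 1) : x = ofBool (x 0) :=
  funext fun j => by rw [Fin.fin_one_eq_zero j]; rfl

noncomputable def arrow : ofBool false ⟶ ofBool true := homOfLE fun _ => Bool.false_le _

theorem covBy_iff_eq_ofBool {x y : posetCube 1} : x ⋖ y ↔ x = ofBool false ∧ y = ofBool true := by
  refine ⟨fun h => ?_, fun ⟨hx, hy⟩ => ?_⟩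
  · have h0 := h.lt.le 0
    have h0' : x 0 ≠ y 0 := fun h' => h.lt.ne (by rw [eq_ofBool x, eq_ofBool y, h'])
    rw [eq_ofBool x, eq_ofBool y]
    revert h0 h0'; cases x 0 <;> cases y 0 <;> simp
  · subst hx hy
    exact Pi.covBy_iff.2 ⟨0, by decide, fun j hj => absurd (Fin.fin_one_eq_zero j) hj⟩

variable {E : Type*} [Category E]

theorem functor_ext {n : ℕ} {F G : posetCube n ⥤ E} (hobj : ∀ x, F.obj x = G.obj x)
    (hmap : ∀ x y (h : x ⋖ y), F.map (homOfLE h.le) ≍ G.map (homOfLE h.le)) : F = G :=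
  letI : LocallyFiniteOrder Bool := Fintype.toLocallyFiniteOrder
  Functor.hext_of_reflTransGen (fun _ _ => le_iff_reflTransGen_covBy (α := Fin n → Bool)) hobj
    fun x y h _ => hmap x y h

theorem functor_ext_zero {F G : posetCube 0 ⥤ E} (h : F.obj default = G.obj default) : F = G :=
  functor_ext (fun x => Subsingleton.elim x default ▸ h)
    fun x y hxy => absurd (Subsingleton.elim x y) hxy.ne

theorem functor_hext_one {F G : posetCube 1 ⥤ E}
    (h₀ : F.obj (ofBool false) = G.obj (ofBool false))
    (h₁ : F.obj (ofBool true) = G.obj (ofBool true)) (h : F.map arrow ≍ G.map arrow) :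
    F = G := by
  have hobj : ∀ x, F.obj x = G.obj x := fun x => by
    rw [eq_ofBool x]
    cases x 0
    exacts [h₀, h₁]
  refine functor_ext hobj fun x y hxy => ?_
  obtain ⟨rfl, rfl⟩ := covBy_iff_eq_ofBool.1 hxy
  exact h

end posetCube

section CubeFunctors

open posetCube

variable {C : Type*} [Category C]

noncomputable def pointFunctor (c : C) : posetCube 0 ⥤ C := (Functor.const _).obj c

noncomputable def arrowFunctor {c c' : C} (f : c ⟶ c') : posetCube 1 ⥤ C :=
  Monotone.functor (f := fun x : posetCube 1 => bif x 0 then (1 : Fin 2) else 0)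
    (fun x y h => by
      dsimp only; have h0 := h 0; revert h0
      cases x 0 <;> cases y 0 <;> decide) ⋙
  ComposableArrows.mk₁ f

/-- The square with vertices `c, c', c'', c''` and edges `f`, `g`, `f ≫ g`, `𝟙 c''`. -/
noncomputable def squareFunctor {c c' c'' : C} (f : c ⟶ c') (g : c' ⟶ c'') : posetCube 2 ⥤ C :=
  Monotone.functor
    (f := fun x : posetCube 2 => bif x 1 then (2 : Fin 3) else bif x 0 then 1 else 0)
    (fun x y h => by
      dsimp only; have h0 := h 0; have h1 := h 1; revert h0 h1
      cases x 0 <;> cases x 1 <;> cases y 0 <;> cases y 1 <;> decide) ⋙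
  ComposableArrows.mk₂ f g

lemma arrowFunctor_injective {c c' : C} {f g : c ⟶ c'} (h : arrowFunctor f = arrowFunctor g) :
    f = g := by
  have h' : f = eqToHom rfl ≫ g ≫ eqToHom rfl := Functor.congr_hom h arrow
  simpa using h'

def vertexHom {n : ℕ} (x : posetCube n) : bx 0 ⟶ bx n := ⟨fun _ => x, IsCubeMap.const x⟩

def segmentHom {n : ℕ} {x y : posetCube n} (h : x ⋖ y) : bx 1 ⟶ bx n :=
  ⟨fun t : Fin 1 → Bool => bif t 0 then y else x, IsCubeMap.segment_of_covBy h⟩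

lemma vertexHom_comp {n : ℕ} (G : posetCube n ⥤ C) (x : posetCube n) :
    functorOfCubeHom (vertexHom x) ⋙ G = pointFunctor (G.obj x) :=
  functor_ext_zero rfl

lemma segmentHom_comp {n : ℕ} (G : posetCube n ⥤ C) {x y : posetCube n} (h : x ⋖ y) :
    functorOfCubeHom (segmentHom h) ⋙ G = arrowFunctor (G.map (homOfLE h.le)) :=
  functor_hext_one rfl rfl HEq.rfl

lemma degHom_comp_pointFunctor (c : C) :
    functorOfCubeHom (degHom 0 0) ⋙ pointFunctor c = arrowFunctor (𝟙 c) :=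
  functor_hext_one rfl rfl HEq.rfl

end CubeFunctors

namespace cubicalNerve

open posetCube

variable {C D : Type} [SmallCategory C] [SmallCategory D] (α : cubicalNerve C ⟶ cubicalNerve D)

/-- `α` on `n`-cubes, typed as a map of functors: the domain of `α.app` is
`(cubicalNerve C).obj _`, which `rw` and `simp` do not unfold. -/
noncomputable def appCube (n : ℕ) (G : posetCube n ⥤ C) : posetCube n ⥤ D := α.app (op (bx n)) G

lemma appCube_comp_functorOfCubeHom {m n : ℕ} (h : bx m ⟶ bx n) (G : posetCube n ⥤ C) :
    appCube α m (functorOfCubeHom h ⋙ G) = functorOfCubeHom h ⋙ appCube α n G :=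
  ConcreteCategory.congr_hom (α.naturality h.op) G

noncomputable def homObj (c : C) : D := (appCube α 0 (pointFunctor c)).obj default

lemma appCube_obj {n : ℕ} (G : posetCube n ⥤ C) (x : posetCube n) :
    (appCube α n G).obj x = homObj α (G.obj x) :=
  (Functor.congr_obj (appCube_comp_functorOfCubeHom α (vertexHom x) G).symm
    (default : posetCube 0)).trans
    (congrArg (fun H => (appCube α 0 H).obj default) (vertexHom_comp G x))

lemma appCube_pointFunctor (c : C) : appCube α 0 (pointFunctor c) = pointFunctor (homObj α c) :=
  functor_ext_zero rfl

noncomputable def homMap {c c' : C} (f : c ⟶ c') : homObj α c ⟶ homObj α c' :=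
  eqToHom (appCube_obj α (arrowFunctor f) (ofBool false)).symm ≫
    (appCube α 1 (arrowFunctor f)).map arrow ≫
    eqToHom (appCube_obj α (arrowFunctor f) (ofBool true))

lemma appCube_arrowFunctor {c c' : C} (f : c ⟶ c') :
    appCube α 1 (arrowFunctor f) = arrowFunctor (homMap α f) :=
  functor_hext_one (appCube_obj α _ _) (appCube_obj α _ _)
    ((eqToHom_comp_heq _ _).trans (comp_eqToHom_heq _ _)).symm

lemma appCube_map_of_covBy {n : ℕ} (G : posetCube n ⥤ C) {x y : posetCube n} (h : x ⋖ y) :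
    (appCube α n G).map (homOfLE h.le) = eqToHom (appCube_obj α G x) ≫
      homMap α (G.map (homOfLE h.le)) ≫ eqToHom (appCube_obj α G y).symm := by
  have h' : functorOfCubeHom (segmentHom h) ⋙ appCube α n G =
      arrowFunctor (homMap α (G.map (homOfLE h.le))) :=
    (appCube_comp_functorOfCubeHom α (segmentHom h) G).symm.trans
      ((congrArg (appCube α 1) (segmentHom_comp G h)).trans (appCube_arrowFunctor α _))
  exact Functor.congr_hom h' arrow

lemma homMap_id (c : C) : homMap α (𝟙 c) = 𝟙 (homObj α c) := by
  apply arrowFunctor_injective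
  refine (appCube_arrowFunctor α _).symm.trans ?_
  refine (congrArg (appCube α 1) (degHom_comp_pointFunctor c).symm).trans ?_
  refine (appCube_comp_functorOfCubeHom α _ _).trans ?_
  refine (congrArg (functorOfCubeHom (degHom 0 0) ⋙ ·) (appCube_pointFunctor α c)).trans ?_
  exact degHom_comp_pointFunctor _

lemma homMap_eqToHom {c c' : C} (h : c = c') :
    homMap α (eqToHom h) = eqToHom (congrArg (homObj α) h) := by
  subst h
  exact homMap_id α c

lemma homMap_comp {c c' c'' : C} (f : c ⟶ c') (g : c' ⟶ c'') :
    homMap α (f ≫ g) = homMap α f ≫ homMap α g := by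
  let v (a b : Bool) : posetCube 2 := ![a, b]
  have h₁ : v false false ⋖ v true false := Pi.covBy_iff.2 ⟨0, by decide, by decide⟩
  have h₂ : v true false ⋖ v true true := Pi.covBy_iff.2 ⟨1, by decide, by decide⟩
  have h₃ : v false false ⋖ v false true := Pi.covBy_iff.2 ⟨1, by decide, by decide⟩
  have h₄ : v false true ⋖ v true true := Pi.covBy_iff.2 ⟨0, by decide, by decide⟩
  have comm :=
    ((appCube α 2 (squareFunctor f g)).map_comp (homOfLE h₃.le) (homOfLE h₄.le)).symm.trans
      ((appCube α 2 (squareFunctor f g)).map_comp (homOfLE h₁.le) (homOfLE h₂.le))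
  -- the top edge `𝟙 c''`, as an `eqToHom` between its two syntactically different endpoints
  have e₄ : (squareFunctor f g).map (homOfLE h₄.le) =
      eqToHom (show (squareFunctor f g).obj (v false true) = (squareFunctor f g).obj (v true true)
        from rfl) := rfl
  rw [appCube_map_of_covBy α _ h₁, appCube_map_of_covBy α _ h₂, appCube_map_of_covBy α _ h₃,
    appCube_map_of_covBy α _ h₄, e₄, homMap_eqToHom] at comm
  simp only [Category.assoc, eqToHom_trans, eqToHom_trans_assoc, eqToHom_refl, Category.id_comp,
    cancel_epi] at comm
  rw [← Category.assoc] at comm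
  exact eq_of_heq
    ((comp_eqToHom_heq _ _).symm.trans ((heq_of_eq comm).trans (comp_eqToHom_heq _ _)))

noncomputable def functorOfHom : C ⥤ D where
  obj := homObj α
  map := homMap α
  map_id := homMap_id α
  map_comp := homMap_comp α

lemma cubicalNerveMap_functorOfHom : cubicalNerveMap (functorOfHom α) = α := by
  ext ⟨⟨n⟩⟩ : 2
  refine ConcreteCategory.hom_ext _ _ fun (G : posetCube n ⥤ C) => ?_
  show G ⋙ functorOfHom α = appCube α n G
  refine functor_ext (fun x => (appCube_obj α G x).symm) fun x y h => ?_
  rw [appCube_map_of_covBy α G h]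
  simp [functorOfHom]

lemma cubicalNerveMap_injective : Function.Injective (cubicalNerveMap : (C ⥤ D) → _) := by
  intro F F' h
  have hcomp {n : ℕ} (G : posetCube n ⥤ C) : G ⋙ F = G ⋙ F' :=
    ConcreteCategory.congr_hom (NatTrans.congr_app h (op (bx n))) G
  have hobj (c : C) : F.obj c = F'.obj c := Functor.congr_obj (hcomp (pointFunctor c)) default
  exact CategoryTheory.Functor.ext hobj fun _ _ f => Functor.congr_hom (hcomp (arrowFunctor f)) arrow

end cubicalNerve

/-- The cubical nerve `N : Cat → cSet`,
`(N C)_n = Cat([1]^n, C)`, is full and faithful: for all small categories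
`C, D`, the map `(C ⥤ D) → (N C ⟶ N D)` is a bijection. -/
theorem cubicalNerve_fullyFaithful (C D : Type) [SmallCategory C]
    [SmallCategory D] :
    Function.Bijective (fun F : C ⥤ D => cubicalNerveMap F) :=
  ⟨cubicalNerve.cubicalNerveMap_injective,
    fun α => ⟨cubicalNerve.functorOfHom α, cubicalNerve.cubicalNerveMap_functorOfHom α⟩⟩
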